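/- For every s ∈ ℝ, the Clausen function C_s is monotone in x on the interval (0, π). More precisely: if s > 0 then C_s is strictly decreasing on (0, π); and if s ≤ 0, then for every x ∈ (0, π) the derivative (d/dx) C_s(x) = −S_{s−1}(x) has the same sign as −sin(πs/2) (so C_s is decreasing on (0, π) when sin(πs/2) > 0, increasing when sin(πs/2) < 0, and constant when sin(πs/2) = 0). -/

import Mathlib

/-!
For `s > 0`, the Mellin transform of the Abel-summed cosine series gives
`Γ(s) C_s(x) = ∫₀^∞ t^(s-1) Re (q e^{ix} / (1 - q e^{ix})) dt` with `q = e^{-t}`: termwise for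
`s > 1`, then for all `s > 0` by analytic continuation. For fixed `0 < q < 1` the integrand is a
strictly increasing function of `cos x`, hence strictly decreasing in `x ∈ (0, π)`.

For `s ≤ 0`, the functional equations of `cosZeta` and `sinZeta` express `C_s` and `S_{s-1}` on
`(0, 2π)` through the convergent Hurwitz series `ζ(σ, a) = ∑ (n + a)^(-σ)`, `σ > 1`, at
`a = x / 2π` and `1 - a`; both carry the factor `sin (π s / 2)`. Differentiating termwise
(`∂ₐ ζ(σ, a) = -σ ζ(σ + 1, a)`) gives `C_s' = -S_{s-1}`, and since `ζ(σ, ·)` decreases and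
`a < 1 - a` for `x < π`, `S_{s-1}(x)` is a positive multiple of `sin (π s / 2)`.
-/

open scoped Real
open Set

/-- The Clausen function `C_s(x) = Re (Li_s (e^{ix}))`, realized via the periodic
(cosine) zeta function, which is automatically `2π`-periodic and even in `x`. -/
noncomputable def Cl (s x : ℝ) : ℝ :=
  (HurwitzZeta.cosZeta (↑(x / (2 * π)) : UnitAddCircle) (s : ℂ)).re

/-- The odd Clausen function `S_s(x) = Im (Li_s (e^{ix}))`. -/
noncomputable def Sl (s x : ℝ) : ℝ :=
  (HurwitzZeta.sinZeta (↑(x / (2 * π)) : UnitAddCircle) (s : ℂ)).re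

open HurwitzZeta Filter Asymptotics MeasureTheory Topology

lemma Real.sign_mul_of_pos {p : ℝ} (hp : 0 < p) (y : ℝ) : Real.sign (p * y) = Real.sign y := by
  rcases lt_trichotomy y 0 with hy | rfl | hy
  · rw [Real.sign_of_neg hy, Real.sign_of_neg (mul_neg_of_pos_of_neg hp hy)]
  · rw [mul_zero]
  · rw [Real.sign_of_pos hy, Real.sign_of_pos (mul_pos hp hy)]

lemma setIntegral_lt_setIntegral_of_lt {α : Type*} [MeasurableSpace α] {μ : Measure α}
    {s : Set α} {f g : α → ℝ} (hs : MeasurableSet s) (hμ : μ s ≠ 0) (hf : IntegrableOn f s μ)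
    (hg : IntegrableOn g s μ) (hfg : ∀ x ∈ s, f x < g x) :
    ∫ x in s, f x ∂μ < ∫ x in s, g x ∂μ := by
  rw [← sub_pos, ← integral_sub hg hf, setIntegral_pos_iff_support_of_nonneg_ae
    ((ae_restrict_iff' hs).mpr (ae_of_all _ fun x hx ↦ (sub_pos.mpr (hfg x hx)).le)) (hg.sub hf)]
  refine (pos_iff_ne_zero.mpr hμ).trans_le (measure_mono fun x hx ↦ ⟨?_, hx⟩)
  exact (sub_pos.mpr (hfg x hx)).ne'

lemma summable_nat_add_rpow_neg {σ a : ℝ} (ha : 0 < a) (hσ : 1 < σ) :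
    Summable fun n : ℕ ↦ ((n : ℝ) + a) ^ (-σ) := by
  refine ((Real.summable_one_div_nat_add_rpow a σ).mpr hσ).congr fun n ↦ ?_
  have : 0 < (n : ℝ) + a := by positivity
  rw [abs_of_pos this, Real.rpow_neg this.le, one_div]

noncomputable def hurwitzSeries (σ a : ℝ) : ℝ := ∑' n : ℕ, ((n : ℝ) + a) ^ (-σ)

section HurwitzSeries

variable {σ a : ℝ}

lemma hurwitzSeries_strictAntiOn (hσ : 1 < σ) : StrictAntiOn (hurwitzSeries σ) (Ioi 0) :=
  fun a (ha : 0 < a) b _ hab ↦ Summable.tsum_lt_tsum (i := 0)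
    (fun n ↦ Real.rpow_le_rpow_of_nonpos (by positivity) (by linarith) (by linarith))
    (Real.rpow_lt_rpow_of_neg (by simpa using ha) (by simpa using hab) (by linarith))
    (summable_nat_add_rpow_neg (ha.trans hab) hσ) (summable_nat_add_rpow_neg ha hσ)

lemma hasDerivAt_hurwitzSeries (hσ : 1 < σ) (ha : 0 < a) :
    HasDerivAt (hurwitzSeries σ) (-σ * hurwitzSeries (σ + 1) a) a := by
  have hpos (n : ℕ) {y : ℝ} (hy : y ∈ Ioi (a / 2)) : 0 < (n : ℝ) + y := by
    have : 0 < y := (half_pos ha).trans hy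
    positivity
  have hderiv (n : ℕ) {y : ℝ} (hy : y ∈ Ioi (a / 2)) :
      HasDerivAt (fun z ↦ ((n : ℝ) + z) ^ (-σ)) (-σ * ((n : ℝ) + y) ^ (-(σ + 1))) y := by
    refine ((Real.hasDerivAt_rpow_const (Or.inl (hpos n hy).ne')).comp y
      ((hasDerivAt_id y).const_add (n : ℝ))).congr_deriv ?_
    rw [mul_one, neg_add']
  have hbound (n : ℕ) {y : ℝ} (hy : y ∈ Ioi (a / 2)) :
      ‖-σ * ((n : ℝ) + y) ^ (-(σ + 1))‖ ≤ σ * ((n : ℝ) + a / 2) ^ (-(σ + 1)) := by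
    rw [norm_mul, norm_neg, Real.norm_of_nonneg (by linarith),
      Real.norm_of_nonneg (Real.rpow_nonneg (hpos n hy).le _)]
    exact mul_le_mul_of_nonneg_left (Real.rpow_le_rpow_of_nonpos (by positivity)
      (by linarith [mem_Ioi.mp hy]) (by linarith)) (by linarith)
  have := hasDerivAt_tsum_of_isPreconnected
    ((summable_nat_add_rpow_neg (half_pos ha) (by linarith)).mul_left σ) isOpen_Ioi
    isPreconnected_Ioi (fun n y hy ↦ hderiv n hy) (fun n y hy ↦ hbound n hy)
    (half_lt_self ha) (summable_nat_add_rpow_neg ha (by linarith)) (half_lt_self ha)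
  rwa [tsum_mul_left] at this

lemma hurwitzZeta_eq_hurwitzSeries (ha : a ∈ Ioc 0 1) (hσ : 1 < σ) :
    hurwitzZeta a σ = hurwitzSeries σ a := by
  refine (hasSum_hurwitzZeta_of_one_lt_re (Ioc_subset_Icc_self ha) (by simpa)).unique ?_
  refine (Complex.hasSum_ofReal.mpr (summable_nat_add_rpow_neg ha.1 hσ).hasSum).congr_fun
    fun n ↦ ?_
  have hpos : 0 < (n : ℝ) + a := by have := ha.1; positivity
  rw [Real.rpow_neg hpos.le, Complex.ofReal_inv, Complex.ofReal_cpow hpos.le, one_div]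
  push_cast
  rfl

lemma hurwitzZeta_neg_eq_hurwitzSeries (ha : a ∈ Ico 0 1) (hσ : 1 < σ) :
    hurwitzZeta (-(a : UnitAddCircle)) σ = hurwitzSeries σ (1 - a) := by
  rw [← AddCircle.coe_neg, ← AddCircle.coe_add_period, neg_add_eq_sub]
  exact hurwitzZeta_eq_hurwitzSeries ⟨by linarith [ha.2], by linarith [ha.1]⟩ hσ

end HurwitzSeries

/-- `∑_{n ≥ 1} rⁿ cos (n x)`, computed as the real part of `z / (1 - z)` for `z = r e^{ix}`. -/
noncomputable def geomCosSum (r x : ℝ) : ℝ :=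
  r * (Real.cos x - r) / (1 - 2 * r * Real.cos x + r ^ 2)

section GeomCosSum

variable {r x : ℝ}

lemma sin_sq_le_one_sub_two_mul_cos_add_sq (r x : ℝ) :
    Real.sin x ^ 2 ≤ 1 - 2 * r * Real.cos x + r ^ 2 := by
  nlinarith [Real.sin_sq_add_cos_sq x, sq_nonneg (r - Real.cos x)]

lemma hasSum_pow_mul_cos (hr : |r| < 1) (x : ℝ) :
    HasSum (fun n : ℕ ↦ r ^ (n + 1) * Real.cos ((n + 1) * x)) (geomCosSum r x) := by
  set z : ℂ := r * Complex.exp (x * Complex.I)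
  have hz : ‖z‖ < 1 := by simpa [z, Complex.norm_exp_ofReal_mul_I] using hr
  have hre (n : ℕ) : (z ^ (n + 1)).re = r ^ (n + 1) * Real.cos ((n + 1) * x) := by
    rw [mul_pow, ← Complex.exp_nat_mul, ← Complex.ofReal_pow,
      show ((n + 1 : ℕ) : ℂ) * (x * Complex.I) = (((n + 1) * x : ℝ) : ℂ) * Complex.I by
        push_cast; ring,
      Complex.re_ofReal_mul, Complex.exp_ofReal_mul_I_re]
  have hsum : (z / (1 - z)).re = geomCosSum r x := by
    have hzre : z.re = r * Real.cos x := by simp [z, Complex.exp_ofReal_mul_I_re]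
    have hzim : z.im = r * Real.sin x := by simp [z, Complex.exp_ofReal_mul_I_im]
    rw [Complex.div_re, Complex.normSq_apply, Complex.sub_re, Complex.sub_im, Complex.one_re,
      Complex.one_im, hzre, hzim, geomCosSum, ← add_div]
    congr 1
    · linear_combination (-r ^ 2) * Real.sin_sq_add_cos_sq x
    · linear_combination r ^ 2 * Real.sin_sq_add_cos_sq x
  have := Complex.reCLM.hasSum ((hasSum_geometric_of_norm_lt_one hz).mul_left z)
  simp only [Complex.reCLM_apply, ← pow_succ', ← div_eq_mul_inv, hsum, hre] at this
  exact this

lemma abs_geomCosSum_le (hr₀ : 0 ≤ r) (hr₁ : r ≤ 1) (hx : Real.sin x ≠ 0) :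
    |geomCosSum r x| ≤ 2 / Real.sin x ^ 2 * r := by
  have hsin : 0 < Real.sin x ^ 2 := by positivity
  have hnum : |r * (Real.cos x - r)| ≤ 2 * r := by
    rw [abs_mul, abs_of_nonneg hr₀, mul_comm]
    gcongr
    exact abs_le.mpr ⟨by linarith [Real.neg_one_le_cos x], by linarith [Real.cos_le_one x]⟩
  have hden := sin_sq_le_one_sub_two_mul_cos_add_sq r x
  rw [geomCosSum, abs_div, abs_of_pos (hsin.trans_le hden), div_mul_eq_mul_div]
  exact div_le_div₀ (by positivity) hnum hsin hden

lemma geomCosSum_strictAntiOn (hr₀ : 0 < r) (hr₁ : r < 1) :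
    StrictAntiOn (geomCosSum r) (Icc 0 π) := by
  intro x hx y hy hxy
  have hcos : Real.cos y < Real.cos x := Real.strictAntiOn_cos hx hy hxy
  have hden (c : ℝ) (hc : c ≤ 1) : 0 < 1 - 2 * r * c + r ^ 2 := by nlinarith
  rw [geomCosSum, geomCosSum, div_lt_div_iff₀ (hden _ (Real.cos_le_one y))
    (hden _ (Real.cos_le_one x))]
  -- the cross-multiplied difference is `r (1 - r²) (cos x - cos y)`
  nlinarith [mul_pos (mul_pos hr₀ (sub_pos.mpr hcos)) (show 0 < 1 - r ^ 2 by nlinarith)]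

lemma locallyIntegrableOn_geomCosSum_exp (hx : Real.sin x ≠ 0) :
    LocallyIntegrableOn (fun t ↦ (geomCosSum (Real.exp (-t)) x : ℂ)) (Ioi 0) := by
  have hsin : 0 < Real.sin x ^ 2 := by positivity
  refine (Complex.continuous_ofReal.comp (Continuous.div (by fun_prop) (by fun_prop) fun t ↦
    (hsin.trans_le (sin_sq_le_one_sub_two_mul_cos_add_sq _ x)).ne')).locallyIntegrable
    |>.locallyIntegrableOn _

lemma norm_geomCosSum_exp_le (hx : Real.sin x ≠ 0) {t : ℝ} (ht : 0 ≤ t) :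
    ‖(geomCosSum (Real.exp (-t)) x : ℂ)‖ ≤ 2 / Real.sin x ^ 2 * Real.exp (-t) := by
  rw [Complex.norm_real, Real.norm_eq_abs]
  exact abs_geomCosSum_le (Real.exp_pos _).le (Real.exp_le_one_iff.mpr (by linarith)) hx

lemma isBigO_geomCosSum_exp_atTop (hx : Real.sin x ≠ 0) :
    (fun t ↦ (geomCosSum (Real.exp (-t)) x : ℂ)) =O[atTop] fun t ↦ Real.exp (-1 * t) := by
  refine IsBigO.of_bound (2 / Real.sin x ^ 2) ?_
  filter_upwards [eventually_ge_atTop 0] with t ht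
  rw [neg_one_mul, Real.norm_of_nonneg (Real.exp_pos _).le]
  exact norm_geomCosSum_exp_le hx ht

lemma isBigO_geomCosSum_exp_nhdsGT_zero (hx : Real.sin x ≠ 0) :
    (fun t ↦ (geomCosSum (Real.exp (-t)) x : ℂ)) =O[𝓝[>] 0] (· ^ (-(0 : ℝ))) := by
  refine IsBigO.of_bound (2 / Real.sin x ^ 2) ?_
  filter_upwards [self_mem_nhdsWithin] with t (ht : 0 < t)
  rw [neg_zero, Real.rpow_zero, norm_one, mul_one]
  exact (norm_geomCosSum_exp_le hx ht.le).trans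
    (mul_le_of_le_one_right (by positivity) (Real.exp_le_one_iff.mpr (by linarith)))

lemma mellin_geomCosSum_exp_of_one_lt_re (x : ℝ) {s : ℂ} (hs : 1 < s.re) :
    mellin (fun t ↦ (geomCosSum (Real.exp (-t)) x : ℂ)) s =
      Complex.Gamma s * cosZeta (x / (2 * π) : ℝ) s := by
  have hterms : HasSum
      (fun n : ℕ ↦ Complex.Gamma s * Real.cos ((n + 1) * x) / ((n + 1 : ℝ) : ℂ) ^ s)
      (mellin (fun t ↦ (geomCosSum (Real.exp (-t)) x : ℂ)) s) := by
    refine hasSum_mellin (fun n ↦ Or.inr (by positivity)) (by linarith) (fun t ht ↦ ?_) ?_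
    · have hr : |Real.exp (-t)| < 1 := by
        rw [abs_of_pos (Real.exp_pos _), Real.exp_lt_one_iff]
        exact neg_lt_zero.mpr ht
      refine (Complex.hasSum_ofReal.mpr (hasSum_pow_mul_cos hr x)).congr_fun fun n ↦ ?_
      rw [← Real.exp_nat_mul]
      push_cast
      ring_nf
    · refine (summable_nat_add_rpow_neg one_pos hs).of_nonneg_of_le (fun n ↦ by positivity)
        fun n ↦ ?_
      rw [Complex.norm_real, Real.rpow_neg (by positivity), ← one_div]
      exact div_le_div_of_nonneg_right (Real.abs_cos_le_one _) (by positivity)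
  have hζ := (hasSum_nat_add_iff' 1).mpr (hasSum_nat_cosZeta (x / (2 * π)) hs)
  rw [Finset.sum_range_one, Nat.cast_zero, Nat.cast_zero,
    Complex.zero_cpow (Complex.ne_zero_of_one_lt_re hs), div_zero, sub_zero] at hζ
  refine hterms.unique ((hζ.mul_left (Complex.Gamma s)).congr_fun fun n ↦ ?_)
  rw [show 2 * π * (x / (2 * π)) * ((n + 1 : ℕ) : ℝ) = (n + 1) * x by
    push_cast; field_simp]
  push_cast
  ring

end GeomCosSum

lemma coe_div_two_pi_ne_zero {x : ℝ} (hx : Real.sin x ≠ 0) :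
    ((x / (2 * π) : ℝ) : UnitAddCircle) ≠ 0 := by
  rw [Ne, AddCircle.coe_eq_zero_iff]
  rintro ⟨n, hn⟩
  rw [zsmul_one, eq_div_iff Real.two_pi_pos.ne'] at hn
  apply hx
  rw [← hn, show (n : ℝ) * (2 * π) = ((2 * n : ℤ) : ℝ) * π by push_cast; ring]
  exact Real.sin_int_mul_pi _

lemma mellin_geomCosSum_exp {x : ℝ} (hx : Real.sin x ≠ 0) {s : ℂ} (hs : 0 < s.re) :
    mellin (fun t ↦ (geomCosSum (Real.exp (-t)) x : ℂ)) s =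
      Complex.Gamma s * cosZeta (x / (2 * π) : ℝ) s := by
  have hU : IsOpen {s : ℂ | 0 < s.re} := isOpen_lt continuous_const Complex.continuous_re
  have hM : AnalyticOnNhd ℂ (mellin fun t ↦ (geomCosSum (Real.exp (-t)) x : ℂ))
      {s : ℂ | 0 < s.re} := by
    refine DifferentiableOn.analyticOnNhd (fun w hw ↦ ?_) hU
    exact (mellin_differentiableAt_of_isBigO_rpow_exp one_pos
      (locallyIntegrableOn_geomCosSum_exp hx) (isBigO_geomCosSum_exp_atTop hx)
      (isBigO_geomCosSum_exp_nhdsGT_zero hx) hw).differentiableWithinAt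
  have hG : AnalyticOnNhd ℂ (fun s ↦ Complex.Gamma s * cosZeta (x / (2 * π) : ℝ) s)
      {s : ℂ | 0 < s.re} := by
    refine DifferentiableOn.analyticOnNhd (fun w hw ↦ ?_) hU
    refine ((Complex.differentiableAt_Gamma w fun m hm ↦ ?_).mul
      (differentiableAt_cosZeta _ (Or.inr (coe_div_two_pi_ne_zero hx)))).differentiableWithinAt
    have : 0 < w.re := hw
    rw [hm, Complex.neg_re, Complex.natCast_re] at this
    linarith [(m.cast_nonneg : (0 : ℝ) ≤ m)]
  refine hM.eqOn_of_preconnected_of_eventuallyEq hG (convex_halfSpace_re_gt 0).isPreconnected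
    (show (0 : ℝ) < (2 : ℂ).re by norm_num) ?_ hs
  filter_upwards [(isOpen_lt continuous_const Complex.continuous_re).mem_nhds
    (show (1 : ℝ) < (2 : ℂ).re by norm_num)] with w hw
  exact mellin_geomCosSum_exp_of_one_lt_re x hw

lemma ofReal_cpow_sub_one_smul {t : ℝ} (ht : 0 < t) (s y : ℝ) :
    (t : ℂ) ^ ((s : ℂ) - 1) • (y : ℂ) = ((t ^ (s - 1) * y : ℝ) : ℂ) := by
  rw [smul_eq_mul, Complex.ofReal_mul, Complex.ofReal_cpow ht.le]
  push_cast
  rfl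

lemma integrableOn_rpow_mul_geomCosSum_exp {x : ℝ} (hx : Real.sin x ≠ 0) {s : ℝ} (hs : 0 < s) :
    IntegrableOn (fun t ↦ t ^ (s - 1) * geomCosSum (Real.exp (-t)) x) (Ioi 0) := by
  have hconv := (mellinConvergent_of_isBigO_rpow_exp one_pos
    (locallyIntegrableOn_geomCosSum_exp hx) (isBigO_geomCosSum_exp_atTop hx)
    (isBigO_geomCosSum_exp_nhdsGT_zero hx) (show (0 : ℝ) < (s : ℂ).re by simpa)).re
  refine IntegrableOn.congr_fun hconv (fun t ht ↦ ?_) measurableSet_Ioi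
  simp only [ofReal_cpow_sub_one_smul ht, RCLike.re_to_complex, Complex.ofReal_re]

lemma Cl_mul_Gamma_eq_integral {x : ℝ} (hx : Real.sin x ≠ 0) {s : ℝ} (hs : 0 < s) :
    Cl s x * Real.Gamma s = ∫ t in Ioi 0, t ^ (s - 1) * geomCosSum (Real.exp (-t)) x := by
  have h := mellin_geomCosSum_exp hx (s := s) (by simpa)
  rw [mellin, setIntegral_congr_fun measurableSet_Ioi fun t ht ↦ ofReal_cpow_sub_one_smul ht s _,
    integral_complex_ofReal, Complex.Gamma_ofReal, mul_comm] at h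
  rw [Cl, ← Complex.ofReal_re (∫ t in Ioi 0, _), h, Complex.re_mul_ofReal]

lemma Cl_strictAntiOn_of_pos {s : ℝ} (hs : 0 < s) : StrictAntiOn (Cl s) (Ioo 0 π) := by
  intro x hx y hy hxy
  have hsin {z : ℝ} (hz : z ∈ Ioo 0 π) : Real.sin z ≠ 0 :=
    (Real.sin_pos_of_pos_of_lt_pi hz.1 hz.2).ne'
  rw [← mul_lt_mul_iff_of_pos_right (Real.Gamma_pos_of_pos hs),
    Cl_mul_Gamma_eq_integral (hsin hx) hs, Cl_mul_Gamma_eq_integral (hsin hy) hs]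
  refine setIntegral_lt_setIntegral_of_lt measurableSet_Ioi (by simp)
    (integrableOn_rpow_mul_geomCosSum_exp (hsin hy) hs)
    (integrableOn_rpow_mul_geomCosSum_exp (hsin hx) hs) fun t (ht : 0 < t) ↦ ?_
  refine mul_lt_mul_of_pos_left ?_ (Real.rpow_pos_of_pos ht _)
  exact geomCosSum_strictAntiOn (Real.exp_pos _) (Real.exp_lt_one_iff.mpr (by linarith))
    (Ioo_subset_Icc_self hx) (Ioo_subset_Icc_self hy) hxy

lemma ofReal_two_pi_cpow (σ : ℝ) : (2 * π : ℂ) ^ (σ : ℂ) = ((2 * π) ^ σ : ℝ) := by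
  rw [Complex.ofReal_cpow (by positivity)]
  push_cast
  rfl

lemma cosZeta_eq_hurwitzSeries {s a : ℝ} (hs : s < 0) (ha : a ∈ Ioo 0 1) :
    cosZeta a s = ((2 * π) ^ (s - 1) * Real.Gamma (1 - s) * Real.sin (π * s / 2) *
      (hurwitzSeries (1 - s) a + hurwitzSeries (1 - s) (1 - a)) : ℝ) := by
  have hne (n : ℕ) : ((1 - s : ℝ) : ℂ) ≠ 1 - n := by
    intro h
    have := congrArg Complex.re h
    simp only [Complex.ofReal_re, Complex.sub_re, Complex.one_re, Complex.natCast_re] at this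
    linarith [(n.cast_nonneg : (0 : ℝ) ≤ n)]
  have hfe := cosZeta_one_sub (a : UnitAddCircle) hne
  rw [show 1 - ((1 - s : ℝ) : ℂ) = s by push_cast; ring, hurwitzZetaEven_eq,
    hurwitzZeta_eq_hurwitzSeries (Ioo_subset_Ioc_self ha) (by linarith),
    hurwitzZeta_neg_eq_hurwitzSeries (Ioo_subset_Ico_self ha) (by linarith),
    ← Complex.ofReal_neg, ofReal_two_pi_cpow, Complex.Gamma_ofReal] at hfe
  rw [hfe, neg_sub, show (π : ℂ) * (1 - s : ℝ) / 2 = (π / 2 - π * s / 2 : ℝ) by push_cast; ring,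
    ← Complex.ofReal_cos, Real.cos_pi_div_two_sub]
  push_cast
  ring

lemma sinZeta_sub_one_eq_hurwitzSeries {s a : ℝ} (hs : s ≤ 0) (ha : a ∈ Ioo 0 1) :
    sinZeta a (s - 1 : ℝ) = ((2 * π) ^ (s - 2) * Real.Gamma (2 - s) * Real.sin (π * s / 2) *
      (hurwitzSeries (2 - s) a - hurwitzSeries (2 - s) (1 - a)) : ℝ) := by
  have hne (n : ℕ) : ((2 - s : ℝ) : ℂ) ≠ -n := by
    intro h
    have := congrArg Complex.re h
    simp only [Complex.ofReal_re, Complex.neg_re, Complex.natCast_re] at this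
    linarith [(n.cast_nonneg : (0 : ℝ) ≤ n)]
  have hfe := sinZeta_one_sub (a : UnitAddCircle) hne
  rw [show 1 - ((2 - s : ℝ) : ℂ) = (s - 1 : ℝ) by push_cast; ring, hurwitzZetaOdd_eq,
    hurwitzZeta_eq_hurwitzSeries (Ioo_subset_Ioc_self ha) (by linarith),
    hurwitzZeta_neg_eq_hurwitzSeries (Ioo_subset_Ico_self ha) (by linarith),
    ← Complex.ofReal_neg, ofReal_two_pi_cpow, Complex.Gamma_ofReal] at hfe
  rw [hfe, neg_sub, show (π : ℂ) * (2 - s : ℝ) / 2 = (π - π * s / 2 : ℝ) by push_cast; ring,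
    ← Complex.ofReal_sin, Real.sin_pi_sub]
  push_cast
  ring

lemma Ioo_zero_pi_subset_Ioo_zero_two_pi : Ioo 0 π ⊆ Ioo 0 (2 * π) :=
  Ioo_subset_Ioo_right (by linarith [Real.pi_pos])

lemma div_two_pi_mem_Ioo {x : ℝ} (hx : x ∈ Ioo 0 (2 * π)) : x / (2 * π) ∈ Ioo 0 1 :=
  ⟨div_pos hx.1 Real.two_pi_pos, (div_lt_one Real.two_pi_pos).mpr hx.2⟩

lemma Cl_eq_hurwitzSeries {s x : ℝ} (hs : s < 0) (hx : x ∈ Ioo 0 (2 * π)) :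
    Cl s x = (2 * π) ^ (s - 1) * Real.Gamma (1 - s) * Real.sin (π * s / 2) *
      (hurwitzSeries (1 - s) (x / (2 * π)) + hurwitzSeries (1 - s) (1 - x / (2 * π))) := by
  rw [Cl, cosZeta_eq_hurwitzSeries hs (div_two_pi_mem_Ioo hx), Complex.ofReal_re]

lemma Sl_sub_one_eq_hurwitzSeries {s x : ℝ} (hs : s ≤ 0) (hx : x ∈ Ioo 0 (2 * π)) :
    Sl (s - 1) x = (2 * π) ^ (s - 2) * Real.Gamma (2 - s) * Real.sin (π * s / 2) *
      (hurwitzSeries (2 - s) (x / (2 * π)) - hurwitzSeries (2 - s) (1 - x / (2 * π))) := by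
  rw [Sl, sinZeta_sub_one_eq_hurwitzSeries hs (div_two_pi_mem_Ioo hx), Complex.ofReal_re]

lemma hasDerivAt_hurwitzSeries_add_reflect {σ x : ℝ} (hσ : 1 < σ) (hx : x ∈ Ioo 0 (2 * π)) :
    HasDerivAt (fun y ↦ hurwitzSeries σ (y / (2 * π)) + hurwitzSeries σ (1 - y / (2 * π)))
      (-σ * (hurwitzSeries (σ + 1) (x / (2 * π)) - hurwitzSeries (σ + 1) (1 - x / (2 * π)))
        / (2 * π)) x := by
  have ha := div_two_pi_mem_Ioo hx
  have hdiv : HasDerivAt (fun y ↦ y / (2 * π)) (1 / (2 * π)) x := by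
    simpa using (hasDerivAt_id x).div_const (2 * π)
  refine (((hasDerivAt_hurwitzSeries hσ ha.1).comp x hdiv).add
    ((hasDerivAt_hurwitzSeries hσ (sub_pos.mpr ha.2)).comp x (hdiv.const_sub 1))).congr_deriv ?_
  ring

lemma hasDerivAt_Cl {s x : ℝ} (hs : s ≤ 0) (hx : x ∈ Ioo 0 (2 * π)) :
    HasDerivAt (Cl s) (-Sl (s - 1) x) x := by
  rcases hs.lt_or_eq with hs' | rfl
  · have hCl : Cl s =ᶠ[𝓝 x] fun y ↦ (2 * π) ^ (s - 1) * Real.Gamma (1 - s) *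
        Real.sin (π * s / 2) *
        (hurwitzSeries (1 - s) (y / (2 * π)) + hurwitzSeries (1 - s) (1 - y / (2 * π))) := by
      filter_upwards [isOpen_Ioo.mem_nhds hx] with y hy using Cl_eq_hurwitzSeries hs' hy
    refine (((hasDerivAt_hurwitzSeries_add_reflect (by linarith) hx).const_mul _)
      |>.congr_of_eventuallyEq hCl).congr_deriv ?_
    have hΓ : Real.Gamma (2 - s) = (1 - s) * Real.Gamma (1 - s) := by
      rw [show 2 - s = (1 - s) + 1 by ring, Real.Gamma_add_one (by linarith)]
    have hpow : (2 * π) ^ (s - 2) = (2 * π) ^ (s - 1) / (2 * π) := by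
      rw [show s - 2 = (s - 1) - 1 by ring, Real.rpow_sub Real.two_pi_pos, Real.rpow_one]
    rw [Sl_sub_one_eq_hurwitzSeries hs hx, hΓ, hpow, show 1 - s + 1 = 2 - s by ring]
    field_simp
  · have hCl : Cl 0 = fun _ ↦ -1 / 2 := by
      ext y
      simp [Cl, cosZeta_apply_zero]
    rw [Sl_sub_one_eq_hurwitzSeries le_rfl hx, hCl]
    simpa using hasDerivAt_const x (-1 / 2 : ℝ)

lemma exists_pos_Sl_sub_one_eq_mul_sin {s x : ℝ} (hs : s ≤ 0) (hx : x ∈ Ioo 0 π) :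
    ∃ P, 0 < P ∧ Sl (s - 1) x = P * Real.sin (π * s / 2) := by
  have hx' := Ioo_zero_pi_subset_Ioo_zero_two_pi hx
  have ha := div_two_pi_mem_Ioo hx'
  have hlt : x / (2 * π) < 1 - x / (2 * π) := by
    rw [lt_sub_iff_add_lt, ← add_div, div_lt_one Real.two_pi_pos]
    linarith [hx.2]
  have hH := hurwitzSeries_strictAntiOn (σ := 2 - s) (by linarith) ha.1
    (show 0 < 1 - x / (2 * π) by linarith [ha.2]) hlt
  refine ⟨(2 * π) ^ (s - 2) * Real.Gamma (2 - s) *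
    (hurwitzSeries (2 - s) (x / (2 * π)) - hurwitzSeries (2 - s) (1 - x / (2 * π))), ?_, ?_⟩
  · have := Real.Gamma_pos_of_pos (show 0 < 2 - s by linarith)
    have := Real.rpow_pos_of_pos Real.two_pi_pos (s - 2)
    have := sub_pos.mpr hH
    positivity
  · rw [Sl_sub_one_eq_hurwitzSeries hs hx']
    ring

lemma continuousOn_Cl {s : ℝ} (hs : s ≤ 0) : ContinuousOn (Cl s) (Ioo 0 (2 * π)) :=
  fun _ hx ↦ (hasDerivAt_Cl hs hx).continuousAt.continuousWithinAt

lemma Cl_strictAntiOn_of_sin_pos {s : ℝ} (hs : s ≤ 0) (hsin : 0 < Real.sin (π * s / 2)) :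
    StrictAntiOn (Cl s) (Ioo 0 π) := by
  refine strictAntiOn_of_hasDerivWithinAt_neg (f' := fun x ↦ -Sl (s - 1) x) (convex_Ioo 0 π)
    ((continuousOn_Cl hs).mono Ioo_zero_pi_subset_Ioo_zero_two_pi) (fun x hx ↦ ?_)
    fun x hx ↦ ?_ <;> rw [interior_Ioo] at hx
  · exact (hasDerivAt_Cl hs (Ioo_zero_pi_subset_Ioo_zero_two_pi hx)).hasDerivWithinAt
  · obtain ⟨P, hP, hSl⟩ := exists_pos_Sl_sub_one_eq_mul_sin hs hx
    rw [hSl, neg_lt_zero]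
    positivity

lemma Cl_strictMonoOn_of_sin_neg {s : ℝ} (hs : s ≤ 0) (hsin : Real.sin (π * s / 2) < 0) :
    StrictMonoOn (Cl s) (Ioo 0 π) := by
  refine strictMonoOn_of_hasDerivWithinAt_pos (f' := fun x ↦ -Sl (s - 1) x) (convex_Ioo 0 π)
    ((continuousOn_Cl hs).mono Ioo_zero_pi_subset_Ioo_zero_two_pi) (fun x hx ↦ ?_)
    fun x hx ↦ ?_ <;> rw [interior_Ioo] at hx
  · exact (hasDerivAt_Cl hs (Ioo_zero_pi_subset_Ioo_zero_two_pi hx)).hasDerivWithinAt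
  · obtain ⟨P, hP, hSl⟩ := exists_pos_Sl_sub_one_eq_mul_sin hs hx
    rw [hSl, neg_pos]
    exact mul_neg_of_pos_of_neg hP hsin

lemma Cl_eq_of_sin_eq_zero {s x y : ℝ} (hs : s ≤ 0) (hsin : Real.sin (π * s / 2) = 0)
    (hx : x ∈ Ioo 0 π) (hy : y ∈ Ioo 0 π) : Cl s x = Cl s y := by
  have hderiv {z : ℝ} (hz : z ∈ Ioo 0 π) := hasDerivAt_Cl hs (Ioo_zero_pi_subset_Ioo_zero_two_pi hz)
  refine isOpen_Ioo.is_const_of_deriv_eq_zero isPreconnected_Ioo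
    (fun z hz ↦ (hderiv hz).differentiableAt.differentiableWithinAt) (fun z hz ↦ ?_) hx hy
  obtain ⟨P, -, hSl⟩ := exists_pos_Sl_sub_one_eq_mul_sin hs hz
  rw [(hderiv hz).deriv, hSl, hsin, mul_zero, neg_zero, Pi.zero_apply]

/-- Monotonicity of `C_s` in `x` on `(0, π)`: strictly decreasing for `s > 0`; for `s ≤ 0`
the derivative `-S_{s-1}(x)` has the same sign as `-sin(πs/2)`, so `C_s` is decreasing when
`sin(πs/2) > 0`, increasing when `sin(πs/2) < 0`, and constant when `sin(πs/2) = 0`. -/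
theorem clausenC_monotone (s : ℝ) :
    (0 < s → StrictAntiOn (Cl s) (Set.Ioo 0 π)) ∧
    (s ≤ 0 → ∀ x ∈ Set.Ioo (0 : ℝ) π,
      HasDerivAt (Cl s) (-(Sl (s - 1) x)) x ∧
      Real.sign (-(Sl (s - 1) x)) = Real.sign (-(Real.sin (π * s / 2)))) ∧
    (s ≤ 0 → 0 < Real.sin (π * s / 2) → StrictAntiOn (Cl s) (Set.Ioo 0 π)) ∧
    (s ≤ 0 → Real.sin (π * s / 2) < 0 → StrictMonoOn (Cl s) (Set.Ioo 0 π)) ∧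
    (s ≤ 0 → Real.sin (π * s / 2) = 0 →
      ∀ x ∈ Set.Ioo (0 : ℝ) π, ∀ y ∈ Set.Ioo (0 : ℝ) π, Cl s x = Cl s y) := by
  refine ⟨Cl_strictAntiOn_of_pos,
    fun hs x hx ↦ ⟨hasDerivAt_Cl hs (Ioo_zero_pi_subset_Ioo_zero_two_pi hx), ?_⟩,
    Cl_strictAntiOn_of_sin_pos, Cl_strictMonoOn_of_sin_neg,
    fun hs hsin x hx y hy ↦ Cl_eq_of_sin_eq_zero hs hsin hx hy⟩
  obtain ⟨P, hP, hSl⟩ := exists_pos_Sl_sub_one_eq_mul_sin hs hx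
  rw [hSl, ← mul_neg, Real.sign_mul_of_pos hP]
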